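/- arXiv:2203.08690 — 5 statements merged into one kernel-verified Lean document; each statement's English description precedes it below -/
import Mathlib

section
/- Let P and Q be nonempty sets and let φ: 2^P → 2^Q be a bijection between their power sets. Then the following are equivalent: (1) there exists a bijection Ψ: P → Q such that φ(S) = Ψ(S) (the image of S) for all S ⊆ P; (2) φ is a homeomorphism with respect to the power-cofinite topologies; (3) φ is order-preserving (S ⊆ T if and only if φ(S) ⊆ φ(T)). -/
/-- The power-cofinite topology on the power set `2^P`: the product topology on `{0,1}^P`
where each factor `{0,1}` carries the topology `{∅, {0}, {0,1}}`.  Its basic open sets are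
`U_F = {T ⊆ P : T ∩ F = ∅}` for finite `F ⊆ P`. -/
def powerCofinite (P : Type*) : TopologicalSpace (Set P) :=
  TopologicalSpace.generateFrom {U : Set (Set P) | ∃ F : Finset P, U = {T : Set P | ∀ a ∈ F, a ∉ T}}

/-!
The specialization order of the power-cofinite topology is inclusion: `S ⤳ T` iff `S ⊆ T`, since
open sets are downward closed and `{T | a ∉ T}` is open. Homeomorphisms preserve specialization,
so (2) implies (3). An order isomorphism of power sets maps atoms, i.e. singletons, to singletons
and preserves unions, so it is the image map of a bijection, which is (1). Finally the image map
of a bijection `e` is the preimage map of `e.symm`, and preimage maps are continuous because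
`g ⁻¹' T` misses the finite set `F` iff `T` misses `g '' F`.
-/

open Topology

section

variable {P Q : Type*}

lemma powerCofinite_isOpen_setOf_forall_notMem (F : Finset P) :
    IsOpen[powerCofinite P] {T | ∀ a ∈ F, a ∉ T} :=
  TopologicalSpace.isOpen_generateFrom_of_mem ⟨F, rfl⟩

lemma isLowerSet_of_isOpen_powerCofinite {U : Set (Set P)} (hU : IsOpen[powerCofinite P] U) :
    IsLowerSet U := by
  induction hU with
  | basic V hV =>
    obtain ⟨F, rfl⟩ := hV
    exact fun S T hTS hS a ha haT => hS a ha (hTS haT)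
  | univ => exact isLowerSet_univ
  | inter U V _ _ hU hV => exact hU.inter hV
  | sUnion s _ hs => exact isLowerSet_sUnion hs

lemma powerCofinite_specializes_iff {S T : Set P} :
    @Specializes _ (powerCofinite P) S T ↔ S ⊆ T := by
  let _ := powerCofinite P
  refine ⟨fun h a haS => ?_, fun hST => specializes_iff_forall_open.2 fun U hU hT =>
    isLowerSet_of_isOpen_powerCofinite hU hST hT⟩
  by_contra haT
  exact specializes_iff_forall_open.1 h _ (powerCofinite_isOpen_setOf_forall_notMem {a})
    (by simpa using haT) a (Finset.mem_singleton_self a) haS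

lemma continuous_preimage_powerCofinite (g : Q → P) :
    Continuous[powerCofinite P, powerCofinite Q] (g ⁻¹' ·) := by
  classical
  refine continuous_generateFrom_iff.2 ?_
  rintro _ ⟨F, rfl⟩
  convert powerCofinite_isOpen_setOf_forall_notMem (F.image g) using 1
  ext S
  simp

lemma isHomeomorph_image_powerCofinite (e : P ≃ Q) :
    @IsHomeomorph _ _ (powerCofinite P) (powerCofinite Q) (e '' ·) := by
  let _ := powerCofinite P
  let _ := powerCofinite Q
  simp only [e.image_eq_preimage_symm]
  exact isHomeomorph_iff_exists_inverse.2 ⟨continuous_preimage_powerCofinite e.symm, (e ⁻¹' ·),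
    fun S => by simp [Set.preimage_preimage], fun T => by simp [Set.preimage_preimage],
    continuous_preimage_powerCofinite e⟩

lemma OrderIso.exists_bijective_image_eq (e : Set P ≃o Set Q) :
    ∃ Ψ : P → Q, Function.Bijective Ψ ∧ ∀ S, e S = Ψ '' S := by
  have hatom (p : P) : ∃ q, e {p} = {q} :=
    Set.isAtom_iff.1 ((e.isAtom_iff _).2 (Set.isAtom_singleton p))
  choose Ψ hΨ using hatom
  have himage (S : Set P) : e S = Ψ '' S := by
    calc e S = e (⋃ p ∈ S, {p}) := by rw [Set.biUnion_of_singleton]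
      _ = ⋃ p ∈ S, e {p} := e.map_iSup₂ _
      _ = Ψ '' S := by simp only [hΨ, ← Set.image_eq_iUnion]
  refine ⟨Ψ, ⟨fun p p' h => ?_, ?_⟩, himage⟩
  · exact Set.singleton_injective (e.injective (by rw [hΨ, hΨ, h]))
  · rw [← Set.range_eq_univ, ← Set.image_univ, ← himage]
    exact e.map_top

end

theorem statement2_general (P Q : Type*)
    (φ : Set P → Set Q) (hφ : Function.Bijective φ) :
    List.TFAE [
      (∃ Ψ : P → Q, Function.Bijective Ψ ∧ ∀ S : Set P, φ S = Ψ '' S),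
      (@IsHomeomorph (Set P) (Set Q) (powerCofinite P) (powerCofinite Q) φ),
      (∀ S T : Set P, S ⊆ T ↔ φ S ⊆ φ T)] := by
  let _ := powerCofinite P
  let _ := powerCofinite Q
  tfae_have 1 → 2 := by
    rintro ⟨Ψ, hΨ, hφΨ⟩
    obtain rfl : φ = (Ψ '' ·) := funext hφΨ
    exact isHomeomorph_image_powerCofinite (Equiv.ofBijective Ψ hΨ)
  tfae_have 2 → 3 := fun h S T => by
    rw [← powerCofinite_specializes_iff, ← powerCofinite_specializes_iff,
      h.isInducing.specializes_iff]
  tfae_have 3 → 1 := fun h =>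
    OrderIso.exists_bijective_image_eq { Equiv.ofBijective φ hφ with map_rel_iff' := (h _ _).symm }
  tfae_finish

/-- For nonempty sets `P`, `Q` and a bijection `φ : 2^P → 2^Q`, the following are equivalent:
(1) `φ` is induced by a bijection `Ψ : P → Q`; (2) `φ` is a homeomorphism for the
power-cofinite topologies; (3) `φ` is order-preserving. -/
theorem statement2 (P Q : Type*) [Nonempty P] [Nonempty Q]
    (φ : Set P → Set Q) (hφ : Function.Bijective φ) :
    List.TFAE [
      (∃ Ψ : P → Q, Function.Bijective Ψ ∧ ∀ S : Set P, φ S = Ψ '' S),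
      (@IsHomeomorph (Set P) (Set Q) (powerCofinite P) (powerCofinite Q) φ),
      (∀ S T : Set P, S ⊆ T ↔ φ S ⊆ φ T)] :=
  statement2_general P Q φ hφ
end

section
/- Let K be a number field and let a = (a_p)_p ∈ A_{K,f} be a finite adele. Let Z(a) = {p : a_p = 0}. Then the closure of the orbit K^*·a (for the diagonal multiplication action of K^* on A_{K,f}) equals {b ∈ A_{K,f} : Z(a) ⊆ Z(b)}. -/
open IsDedekindDomain
open scoped WithZero

section Helpers

open Function Set IsDedekindDomain.HeightOneSpectrum Multiplicative nonZeroDivisors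

variable {R K : Type*} [CommRing R] [IsDedekindDomain R] [Field K] [Algebra R K]
  [IsFractionRing R K]

lemma exists_nat_coe_lt (δ : ℤᵐ⁰) (hδ : δ ≠ 0) :
    ∃ n : ℕ, WithZero.exp (-(n : ℤ)) < δ := by
  rw [← WithZero.exp_log hδ]
  refine ⟨(-(WithZero.log δ)).toNat + 1, ?_⟩
  rw [WithZero.exp_lt_exp]
  have := Int.self_le_toNat (-(WithZero.log δ))
  push_cast
  omega

lemma exists_pow_uniformizer (v : HeightOneSpectrum R) (n : ℕ) :
    ∃ r : R, r ≠ 0 ∧ v.intValuation r = WithZero.exp (-(n : ℤ)) := by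
  obtain ⟨π, hπ⟩ := v.intValuation_exists_uniformizer
  refine ⟨π ^ n, pow_ne_zero _ ?_, ?_⟩
  · rintro rfl
    rw [map_zero] at hπ
    exact WithZero.exp_ne_zero hπ.symm
  · rw [map_pow, hπ, ← WithZero.exp_nsmul]
    congr 1
    simp

lemma finite_intValuation_lt_one {d : R} (hd : d ≠ 0) :
    {v : HeightOneSpectrum R | v.intValuation d < 1}.Finite := by
  simp_rw [intValuation_lt_one_iff_dvd]
  apply Ideal.finite_factors
  simpa only [Submodule.zero_eq_bot, ne_eq, Ideal.span_singleton_eq_bot]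

lemma valuation_algebraMap_le_pow {v : HeightOneSpectrum R} {z : R} {m : ℕ}
    (h : z ∈ v.asIdeal ^ m) :
    v.valuation K (algebraMap R K z) ≤ WithZero.exp (-(m : ℤ)) := by
  rw [valuation_of_algebraMap]
  rw [intValuation_le_pow_iff_dvd]
  exact Ideal.dvd_span_singleton.2 h

/-- Chinese remainder theorem with a nonzero solution. -/
lemma crt_nonzero (s : Finset (HeightOneSpectrum R)) (e : HeightOneSpectrum R → ℕ)
    (t : HeightOneSpectrum R → R) :
    ∃ y : R, y ≠ 0 ∧ ∀ v ∈ s, y - t v ∈ v.asIdeal ^ e v := by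
  classical
  obtain ⟨y₀, hy₀⟩ := IsDedekindDomain.exists_forall_sub_mem_ideal (s := s)
    (fun v : HeightOneSpectrum R => v.asIdeal) e
    (fun v _ => Ideal.prime_of_isPrime v.ne_bot v.isPrime)
    (fun i _ j _ hij => fun h => hij (HeightOneSpectrum.ext h))
    (fun i => t i)
  -- a nonzero element in all the relevant prime powers
  have hπ : ∀ v : HeightOneSpectrum R, ∃ π : R, π ≠ 0 ∧ π ∈ v.asIdeal ^ e v := by
    intro v
    obtain ⟨π, hπ0, hπv⟩ := exists_pow_uniformizer v (e v)
    refine ⟨π, hπ0, ?_⟩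
    have : v.intValuation π ≤ WithZero.exp (-((e v : ℕ) : ℤ)) := le_of_eq hπv
    rw [intValuation_le_pow_iff_dvd] at this
    exact Ideal.dvd_span_singleton.1 this
  choose π hπ0 hπmem using hπ
  set g : R := ∏ v ∈ s, π v with hg
  have hg0 : g ≠ 0 := Finset.prod_ne_zero_iff.2 fun v _ => hπ0 v
  have hgmem : ∀ v ∈ s, g ∈ v.asIdeal ^ e v := by
    intro v hv
    rw [hg, ← Finset.prod_erase_mul _ _ hv]
    exact Ideal.mul_mem_left _ _ (hπmem v)
  by_cases h0 : y₀ = 0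
  · refine ⟨g, hg0, fun v hv => ?_⟩
    have : g - t v = (y₀ - t v) + g := by rw [h0]; ring
    rw [this]
    exact Ideal.add_mem _ (hy₀ v hv) (hgmem v hv)
  · exact ⟨y₀, h0, hy₀⟩

/-- Strong-approximation-style lemma: approximate finitely many elements of `K`
at finitely many places while staying integral elsewhere. -/
lemma approx_with_denominator (T' : Finset (HeightOneSpectrum R))
    (k : HeightOneSpectrum R → K) (ε : HeightOneSpectrum R → ℤᵐ⁰)
    (hε : ∀ v, ε v ≠ 0) :
    ∃ x : K, x ≠ 0 ∧ (∀ v ∈ T', v.valuation K (x - k v) ≤ ε v) ∧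
      ∀ v ∉ T', v.valuation K x ≤ 1 := by
  classical
  obtain ⟨d, hd⟩ := IsLocalization.exist_integer_multiples R⁰ T' k
  have hy : ∀ v : T', ∃ r : R, algebraMap R K r = (d : R) • k v := fun v => hd v v.2
  choose y hy using hy
  have hdK0 : (d : R) ≠ 0 := nonZeroDivisors.coe_ne_zero d
  have hdv : ∀ v : HeightOneSpectrum R, v.intValuation (d : R) ≠ 0 := by
    intro v
    exact intValuation_ne_zero v _ hdK0
  set ε' : HeightOneSpectrum R → ℤᵐ⁰ := fun v => if v ∈ T' then ε v else 1 with hε'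
  have hε'0 : ∀ v, v.intValuation (d : R) * ε' v ≠ 0 := by
    intro v
    apply mul_ne_zero (hdv v)
    by_cases h : v ∈ T' <;> simp [hε', h, hε v]
  choose n hn using fun v => exists_nat_coe_lt _ (hε'0 v)
  set W : Finset (HeightOneSpectrum R) := (finite_intValuation_lt_one hdK0).toFinset with hW
  set s : Finset (HeightOneSpectrum R) := T' ∪ W with hs
  set t : HeightOneSpectrum R → R := fun v => if h : v ∈ T' then y ⟨v, h⟩ else 0 with ht
  obtain ⟨z, hz0, hz⟩ := crt_nonzero s n t
  have hdKne : algebraMap R K (d : R) ≠ 0 := fun h =>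
    hdK0 (IsFractionRing.injective R K (by rw [h, map_zero]))
  refine ⟨algebraMap R K z / algebraMap R K (d : R), ?_, ?_, ?_⟩
  · apply div_ne_zero _ hdKne
    exact fun h => hz0 (IsFractionRing.injective R K (by rw [h, map_zero]))
  · intro v hv
    have hkv : k v = algebraMap R K (y ⟨v, hv⟩) / algebraMap R K (d : R) := by
      rw [eq_div_iff hdKne, hy ⟨v, hv⟩, Algebra.smul_def, mul_comm]
    rw [hkv, div_sub_div_same, ← map_sub, map_div₀]
    have h1 : v.valuation K (algebraMap R K (z - y ⟨v, hv⟩)) ≤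
        v.intValuation (d : R) * ε v := by
      refine le_trans (valuation_algebraMap_le_pow (m := n v) ?_) ?_
      · have := hz v (Finset.mem_union_left _ hv)
        simpa only [ht, dif_pos hv] using this
      · refine le_trans (hn v).le ?_
        simp only [hε', if_pos hv]
        exact le_rfl
    have h2 : v.valuation K (algebraMap R K (d : R)) = v.intValuation (d : R) :=
      valuation_of_algebraMap v (d : R)
    rw [h2, div_eq_mul_inv]
    calc v.valuation K (algebraMap R K (z - y ⟨v, hv⟩)) * (v.intValuation (d : R))⁻¹
        ≤ (v.intValuation (d : R) * ε v) * (v.intValuation (d : R))⁻¹ :=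
          mul_le_mul_left h1 _
      _ = ε v := by
          rw [mul_right_comm, mul_inv_cancel₀ (hdv v), one_mul]
  · intro v hv
    rw [map_div₀, div_eq_mul_inv, valuation_of_algebraMap, valuation_of_algebraMap]
    have key : v.intValuation z ≤ v.intValuation (d : R) := by
      by_cases hvW : v ∈ W
      · have hmem := hz v (Finset.mem_union_right _ hvW)
        simp only [ht, dif_neg hv, sub_zero] at hmem
        have h1 : v.valuation K (algebraMap R K z) ≤ WithZero.exp (-((n v : ℕ) : ℤ)) :=
          valuation_algebraMap_le_pow hmem
        rw [valuation_of_algebraMap] at h1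
        refine le_trans h1 (le_trans (hn v).le ?_)
        simp only [hε', if_neg hv, mul_one]
        exact le_rfl
      · have h1 : v.intValuation (d : R) = 1 := by
          refine le_antisymm ?_ ?_
          · exact intValuation_le_one v _
          · by_contra h
            apply hvW
            rw [hW, Set.Finite.mem_toFinset]
            exact not_le.mp h
        rw [h1]
        exact intValuation_le_one v _
    calc v.intValuation z * (v.intValuation (d : R))⁻¹
        ≤ v.intValuation (d : R) * (v.intValuation (d : R))⁻¹ := mul_le_mul_left key _
      _ = 1 := mul_inv_cancel₀ (hdv v)

lemma valued_algebraMap_eq (v : HeightOneSpectrum R) (x : K) :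
    Valued.v (algebraMap K (v.adicCompletion K) x) = v.valuation K x :=
  valuedAdicCompletion_eq_valuation' v x

lemma closedBall_mem_nhds_zero (v : HeightOneSpectrum R) (r : R) (hr : r ≠ 0) :
    {y : v.adicCompletion K | Valued.v y ≤ v.intValuation r} ∈ nhds (0 : v.adicCompletion K) := by
  set a : v.adicCompletion K := algebraMap K (v.adicCompletion K) (algebraMap R K r) with ha
  have hva : Valued.v a = v.intValuation r := by
    rw [ha, valued_algebraMap_eq, valuation_of_algebraMap]
  have hopen : IsOpen ((fun y => a⁻¹ * y) ⁻¹'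
      (v.adicCompletionIntegers K : Set (v.adicCompletion K))) :=
    (Valued.isOpen_valuationSubring _).preimage (continuous_const.mul continuous_id)
  refine Filter.mem_of_superset (hopen.mem_nhds ?_) ?_
  · simp only [Set.mem_preimage, mul_zero]
    exact zero_mem _
  · intro y hy
    simp only [Set.mem_preimage, SetLike.mem_coe, mem_adicCompletionIntegers, Valuation.map_mul,
      map_inv₀, hva] at hy
    show Valued.v y ≤ v.intValuation r
    have e : Valued.v y = v.intValuation r * ((v.intValuation r)⁻¹ * Valued.v y) := by
      rw [← mul_assoc, mul_inv_cancel₀ (intValuation_ne_zero v r hr), one_mul]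
    rw [e]
    exact mul_le_of_le_one_right' hy

lemma ball_mem_nhds_zero (v : HeightOneSpectrum R) (γ : ℤᵐ⁰) (hγ : γ ≠ 0) :
    {y : v.adicCompletion K | Valued.v y < γ} ∈ nhds (0 : v.adicCompletion K) := by
  obtain ⟨n, hn⟩ := exists_nat_coe_lt γ hγ
  obtain ⟨r, hr0, hrv⟩ := exists_pow_uniformizer v n
  refine Filter.mem_of_superset (closedBall_mem_nhds_zero (K := K) v r hr0) fun y hy => ?_
  have hy' : Valued.v y ≤ v.intValuation r := hy
  rw [hrv] at hy'
  exact lt_of_le_of_lt hy' hn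

lemma dense_adicCompletion (v : HeightOneSpectrum R) (c : v.adicCompletion K) {γ : ℤᵐ⁰}
    (hγ : γ ≠ 0) :
    ∃ k : K, Valued.v (algebraMap K (v.adicCompletion K) k - c) < γ := by
  have hU : {y : v.adicCompletion K | Valued.v (y - c) < γ} ∈ nhds c :=
    (continuous_sub_right c).continuousAt.preimage_mem_nhds
      (t := {y : v.adicCompletion K | Valued.v y < γ}) (by simpa using ball_mem_nhds_zero v γ hγ)
  have hd : DenseRange (algebraMap K (v.adicCompletion K)) :=
    denseRange_algebraMap (R := R) (K := K) (v := v)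
  obtain ⟨y, hy1, k, rfl⟩ := mem_closure_iff_nhds.1 (hd c) _ hU
  exact ⟨k, hy1⟩

lemma nhds_zero_basis :
    (nhds (0 : FiniteAdeleRing R K)).HasBasis (fun _ : R⁰ => True)
      (fun r => {c | ∀ v : HeightOneSpectrum R, Valued.v (c v) ≤ v.intValuation (r : R)}) := by
  classical
  have hopen : ∀ v : HeightOneSpectrum R,
      IsOpen ((v.adicCompletionIntegers K : Set (v.adicCompletion K))) :=
    fun v => Valued.isOpen_valuationSubring _
  let x0 : (v : HeightOneSpectrum R) → (v.adicCompletionIntegers K : Set (v.adicCompletion K)) :=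
    fun v => ⟨0, (v.adicCompletionIntegers K).zero_mem⟩
  let f : ((v : HeightOneSpectrum R) → (v.adicCompletionIntegers K : Set (v.adicCompletion K))) →
      FiniteAdeleRing R K := RestrictedProduct.structureMap
      (fun v : HeightOneSpectrum R => v.adicCompletion K)
      (fun v => (v.adicCompletionIntegers K : Set (v.adicCompletion K))) Filter.cofinite
  have hN : nhds (0 : FiniteAdeleRing R K) = Filter.map f (nhds x0) :=
    RestrictedProduct.nhds_eq_map_structureMap hopen x0
  rw [Filter.hasBasis_iff]
  intro t
  rw [hN, Filter.mem_map, nhds_pi, Filter.mem_pi]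
  constructor
  · rintro ⟨I, hI, u, hu, hsub⟩
    have hδ : ∀ v, ∃ δ : ℤᵐ⁰, δ ≠ 0 ∧ ∀ y : v.adicCompletion K,
        ∀ hy : y ∈ v.adicCompletionIntegers K, Valued.v y < δ →
          (⟨y, hy⟩ : (v.adicCompletionIntegers K : Set (v.adicCompletion K))) ∈ u v := by
      intro v
      obtain ⟨w, hw, hwu⟩ := (mem_nhds_subtype _ _ _).1 (hu v)
      obtain ⟨γ, hγ⟩ := Valued.mem_nhds_zero.1 hw
      refine ⟨MonoidWithZeroHom.ValueGroup₀.embedding γ.1, (γ.isUnit.map _).ne_zero,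
        fun y hy hyγ => hwu (hγ ?_)⟩
      show Valued.v.restrict y < γ.1
      rw [Valuation.restrict_lt_iff_lt_embedding]
      exact hyγ
    choose δ hδ0 hδu using hδ
    choose n hn using fun v => exists_nat_coe_lt (δ v) (hδ0 v)
    obtain ⟨y, hy0, hy⟩ := crt_nonzero hI.toFinset n (fun _ => 0)
    refine ⟨⟨y, mem_nonZeroDivisors_of_ne_zero hy0⟩, trivial, fun c hc => ?_⟩
    have hc' : ∀ v : HeightOneSpectrum R, Valued.v (c v) ≤ v.intValuation y :=
      Set.mem_setOf_eq.mp hc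
    have hcint : ∀ v : HeightOneSpectrum R, c v ∈ v.adicCompletionIntegers K := fun v =>
      le_trans (hc' v) (intValuation_le_one v y)
    have hx : ((fun v => ⟨c v, hcint v⟩ : (v : HeightOneSpectrum R) →
        (v.adicCompletionIntegers K : Set (v.adicCompletion K)))) ∈ I.pi u := by
      refine Set.mem_pi.2 fun v hv => ?_
      apply hδu v
      have h2 : v.intValuation y ≤ WithZero.exp (-(n v : ℤ)) := by
        rw [intValuation_le_pow_iff_dvd, Ideal.dvd_span_singleton]
        simpa using hy v (hI.mem_toFinset.2 hv)
      exact lt_of_le_of_lt ((hc' v).trans h2) (hn v)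
    exact hsub hx
  · rintro ⟨r, -, hrt⟩
    refine ⟨_, finite_intValuation_lt_one (nonZeroDivisors.coe_ne_zero r),
      fun v => {y | Valued.v (y : v.adicCompletion K) ≤ v.intValuation (r : R)},
      fun v => ?_, fun x hx => hrt ?_⟩
    · exact (continuous_subtype_val.continuousAt (x := x0 v)).preimage_mem_nhds
        (t := {y : v.adicCompletion K | Valued.v y ≤ v.intValuation (r : R)})
        (closedBall_mem_nhds_zero v r (nonZeroDivisors.coe_ne_zero r))
    · refine Set.mem_setOf_eq.mpr fun v => ?_
      by_cases hv : v.intValuation (r : R) < 1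
      · exact (Set.mem_pi.1 hx) v hv
      · have h1 : v.intValuation (r : R) = 1 :=
          le_antisymm (intValuation_le_one v _) (not_lt.1 hv)
        rw [h1]
        exact (x v).2

end Helpers

open Function Set IsDedekindDomain.HeightOneSpectrum Multiplicative nonZeroDivisors in
/-- For a finite adele `a` over a number field `K`, the closure of the orbit `K^* · a`
(diagonal multiplication action of `K^*` on the finite adele ring) is
`{b : Z(a) ⊆ Z(b)}`, where `Z(a) = {v : a_v = 0}` is the zero set of `a`. -/
theorem statement7 (K : Type*) [Field K] [NumberField K]
    (a : FiniteAdeleRing (NumberField.RingOfIntegers K) K) :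
    closure {b : FiniteAdeleRing (NumberField.RingOfIntegers K) K |
        ∃ x : K, x ≠ 0 ∧
          b = algebraMap K (FiniteAdeleRing (NumberField.RingOfIntegers K) K) x * a}
      = {b : FiniteAdeleRing (NumberField.RingOfIntegers K) K |
          ∀ v : HeightOneSpectrum (NumberField.RingOfIntegers K), a v = 0 → b v = 0} := by
  classical
  set R := NumberField.RingOfIntegers K with hRdef
  have hBasis : ∀ b : FiniteAdeleRing R K, (nhds b).HasBasis
      (fun _ : nonZeroDivisors R => True)
      (fun r => {c | ∀ v : HeightOneSpectrum R, Valued.v ((c - b) v) ≤ v.intValuation (r : R)}) :=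
    fun b => by
      have := (nhds_zero_basis (R := R) (K := K)).comap (fun c => c - b)
      rw [nhds_translation_sub] at this
      exact this
  ext b
  simp only [Set.mem_setOf_eq]
  constructor
  · intro hb v hav
    by_contra hbv
    have hbvV : Valued.v (b v) ≠ 0 := (Valuation.ne_zero_iff _).2 hbv
    obtain ⟨m, hm⟩ := exists_nat_coe_lt _ hbvV
    obtain ⟨r, hr0, hrv⟩ := exists_pow_uniformizer v m
    obtain ⟨c, ⟨x, hx0, rfl⟩, hc⟩ := (mem_closure_iff_nhds_basis (hBasis b)).1 hb
      ⟨r, mem_nonZeroDivisors_of_ne_zero hr0⟩ trivial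
    have h2 := Set.mem_setOf_eq.mp hc v
    have h3 : ((algebraMap K (FiniteAdeleRing R K) x * a - b) v) = - (b v) := by
      show algebraMap K (v.adicCompletion K) x * a v - b v = - (b v)
      simp only [hav, mul_zero, zero_sub]
    have h2' : Valued.v (-(b v)) ≤ v.intValuation r := by rw [← h3]; exact h2
    rw [Valuation.map_neg, hrv] at h2'
    exact absurd (lt_of_le_of_lt h2' hm) (lt_irrefl _)
  · intro hb
    rw [mem_closure_iff_nhds_basis (hBasis b)]
    rintro r -
    have hr0 : (r : R) ≠ 0 := nonZeroDivisors.coe_ne_zero r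
    have hafin : {v : HeightOneSpectrum R | a v ∉ v.adicCompletionIntegers K}.Finite :=
      Filter.eventually_cofinite.mp a.2
    have hbfin : {v : HeightOneSpectrum R | b v ∉ v.adicCompletionIntegers K}.Finite :=
      Filter.eventually_cofinite.mp b.2
    have hrfin := finite_intValuation_lt_one hr0
    set T : Finset (HeightOneSpectrum R) :=
      hafin.toFinset ∪ hbfin.toFinset ∪ hrfin.toFinset with hT
    set T' : Finset (HeightOneSpectrum R) := T.filter (fun v => ¬ (a v = 0)) with hT'
    have haT' : ∀ v ∈ T', a v ≠ 0 := fun v hv => by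
      have := (Finset.mem_filter.1 hv).2; simpa using this
    have hVa : ∀ v ∈ T', Valued.v (a v) ≠ 0 := fun v hv =>
      (Valuation.ne_zero_iff _).2 (haT' v hv)
    have hrne : ∀ v : HeightOneSpectrum R, v.intValuation (r : R) ≠ 0 := fun v => by
      exact intValuation_ne_zero v _ hr0
    set ε : HeightOneSpectrum R → ℤᵐ⁰ :=
      fun v => if h : v ∈ T' then v.intValuation (r : R) * (Valued.v (a v))⁻¹ else 1
      with hεdef
    have hεpos : ∀ v (h : v ∈ T'), ε v = v.intValuation (r : R) * (Valued.v (a v))⁻¹ :=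
      fun v h => dif_pos h
    have hεone : ∀ v (h : v ∉ T'), ε v = 1 := fun v h => dif_neg h
    have hε : ∀ v, ε v ≠ 0 := by
      intro v
      by_cases h : v ∈ T'
      · rw [hεpos v h]; exact mul_ne_zero (hrne v) (inv_ne_zero (hVa v h))
      · rw [hεone v h]; exact one_ne_zero
    have hkex : ∀ v : HeightOneSpectrum R, ∃ kv : K, v ∈ T' →
        Valued.v (algebraMap K (v.adicCompletion K) kv - b v / a v) < ε v := by
      intro v
      by_cases hv : v ∈ T'
      · obtain ⟨kv, hkv⟩ := dense_adicCompletion v (b v / a v) (hε v)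
        exact ⟨kv, fun _ => hkv⟩
      · exact ⟨0, fun h => absurd h hv⟩
    choose k hk using hkex
    obtain ⟨x, hx0, hxT', hxout⟩ := approx_with_denominator T' k ε hε
    refine ⟨algebraMap K (FiniteAdeleRing R K) x * a, ⟨x, hx0, rfl⟩, ?_⟩
    refine Set.mem_setOf_eq.mpr fun v => ?_
    have hcomp : ((algebraMap K (FiniteAdeleRing R K) x * a - b) v)
        = algebraMap K (v.adicCompletion K) x * a v - b v := rfl
    rw [hcomp]
    by_cases hav : a v = 0
    · simp only [hav, hb v hav, mul_zero, sub_zero, map_zero]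
      exact zero_le'
    by_cases hvT : v ∈ T'
    · -- main estimate at places of T'
      have hεv : ε v = v.intValuation (r : R) * (Valued.v (a v))⁻¹ := hεpos v hvT
      have hεa : ε v * Valued.v (a v) = v.intValuation (r : R) := by
        rw [hεv, mul_assoc, inv_mul_cancel₀ (hVa v hvT), mul_one]
      have hdecomp : algebraMap K (v.adicCompletion K) x * a v - b v
          = (algebraMap K (v.adicCompletion K) x - algebraMap K (v.adicCompletion K) (k v)) * a v
            + (algebraMap K (v.adicCompletion K) (k v) - b v / a v) * a v := by
        rw [sub_mul, sub_mul, div_mul_cancel₀ _ hav]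
        ring
      rw [hdecomp]
      refine le_trans (Valuation.map_add _ _ _) (max_le ?_ ?_)
      · rw [Valuation.map_mul, ← RingHom.map_sub, valued_algebraMap_eq]
        calc v.valuation K (x - k v) * Valued.v (a v)
            ≤ ε v * Valued.v (a v) := mul_le_mul_left (hxT' v hvT) _
          _ = v.intValuation (r : R) := hεa
      · rw [Valuation.map_mul]
        calc Valued.v (algebraMap K (v.adicCompletion K) (k v) - b v / a v) * Valued.v (a v)
            ≤ ε v * Valued.v (a v) := mul_le_mul_left (hk v hvT).le _
          _ = v.intValuation (r : R) := hεa
    · -- outside T'; here a v ≠ 0, so v ∉ T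
      have hvT2 : v ∉ T := fun h => hvT (Finset.mem_filter.2 ⟨h, by simpa using hav⟩)
      have h1 : a v ∈ v.adicCompletionIntegers K := by
        by_contra h
        exact hvT2 (Finset.mem_union_left _ (Finset.mem_union_left _
          (hafin.mem_toFinset.2 h)))
      have h2 : b v ∈ v.adicCompletionIntegers K := by
        by_contra h
        exact hvT2 (Finset.mem_union_left _ (Finset.mem_union_right _
          (hbfin.mem_toFinset.2 h)))
      have h3 : v.intValuation (r : R) = 1 := by
        refine le_antisymm (by exact intValuation_le_one v _) ?_
        by_contra h
        exact hvT2 (Finset.mem_union_right _ (hrfin.mem_toFinset.2 (not_le.1 h)))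
      refine le_trans (Valuation.map_sub _ _ _) (max_le ?_ ?_)
      · rw [Valuation.map_mul, h3]
        exact mul_le_one' (by rw [valued_algebraMap_eq]; exact hxout v hvT) h1
      · rw [h3]
        exact h2
end

section
/- Let K be a number field. The map A_{K,f} → 2^{P_K}, a ↦ Z(a) = {p : a_p = 0}, descends to a bijection from the quasi-orbit space Q(A_{K,f}/K^*) onto the power set 2^{P_K}, which is a homeomorphism when 2^{P_K} carries the power-cofinite topology and the quasi-orbit space carries the quotient topology. -/
/-
By strong approximation (`K` is dense in `𝔸_{K,f}`, a consequence of the Chinese remainder theorem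
and of the density of `K` in each completion), the closure of the orbit `K^* a` is the set of adeles
vanishing wherever `a` vanishes. Hence `a` and `b` are quasi-orbit equivalent exactly when
`Z(a) = Z(b)`, i.e. the quasi-orbit relation is the kernel of `Z`. The map `Z` is continuous for
the power-cofinite topology, surjective, and open: near `a`, the zero set can be prescribed to be
any `T` avoiding the finitely many places where `a` is not small. So `Z` is a quotient map, and
the quotient by its kernel is homeomorphic to `2^{P_K}`.
-/

open IsDedekindDomain

/-- The quasi-orbit equivalence relation for the action of `K^*` on the finite adele ring:
two adeles are equivalent when their orbit closures coincide. -/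
noncomputable def quasiOrbitSetoid (K : Type*) [Field K] [NumberField K] :
    Setoid (FiniteAdeleRing (NumberField.RingOfIntegers K) K) :=
  Setoid.ker (fun a => closure {b : FiniteAdeleRing (NumberField.RingOfIntegers K) K |
    ∃ x : K, x ≠ 0 ∧
      b = algebraMap K (FiniteAdeleRing (NumberField.RingOfIntegers K) K) x * a})

open HeightOneSpectrum Topology Filter

theorem Valued.setOf_sub_lt_mem_nhds {L Γ₀ : Type*} [Field L] [LinearOrderedCommGroupWithZero Γ₀]
    [Valued L Γ₀] (x : L) {y : L} (hy : y ≠ 0) :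
    {z : L | Valued.v (z - x) < Valued.v y} ∈ 𝓝 x := by
  rw [Valued.mem_nhds]
  exact ⟨Units.mk0 (Valued.v.restrict y) ((Valuation.ne_zero_iff _).mpr hy),
    fun z hz => (Valuation.restrict_lt_iff _).mp hz⟩

namespace IsDedekindDomain.HeightOneSpectrum

variable {R : Type*} [CommRing R] [IsDedekindDomain R] {K : Type*} [Field K] [Algebra R K]
  [IsFractionRing R K]

theorem finite_setOf_intValuation_lt_one {a : R} (ha : a ≠ 0) :
    {v : HeightOneSpectrum R | v.intValuation a < 1}.Finite :=
  (Ideal.finite_factors (by rwa [Ne, Ideal.zero_eq_bot, Ideal.span_singleton_eq_bot])).subset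
    fun v hv => (v.intValuation_lt_one_iff_dvd a).mp hv

theorem exists_setOf_valued_le_intValuation_subset (v : HeightOneSpectrum R)
    {U : Set (v.adicCompletion K)} (hU : U ∈ 𝓝 0) :
    ∃ r : R, r ≠ 0 ∧ {z | Valued.v z ≤ v.intValuation r} ⊆ U := by
  obtain ⟨γ, hγ⟩ := Valued.mem_nhds_zero.mp hU
  obtain ⟨n, hn⟩ := WithZero.exists_exp_neg_natCast_lt
    ((map_ne_zero (MonoidWithZeroHom.ValueGroup₀.embedding)).mpr γ.ne_zero)
  obtain ⟨π, hπ⟩ := v.intValuation_exists_uniformizer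
  have hπn : v.intValuation (π ^ n) = WithZero.exp (-(n : ℤ)) := by
    rw [map_pow, hπ, ← WithZero.exp_nsmul]
    simp
  refine ⟨π ^ n, ne_zero_of_map (f := v.intValuation) (hπn ▸ WithZero.exp_ne_zero),
    fun z hz => hγ ?_⟩
  rw [Set.mem_ofPred_eq, Valuation.restrict_lt_iff_lt_embedding]
  exact (hz.trans hπn.le).trans_lt hn

theorem exists_valued_coe_sub_le_intValuation (v : HeightOneSpectrum R) (x : v.adicCompletion K)
    {r : R} (hr : r ≠ 0) : ∃ t : K, Valued.v ((t : v.adicCompletion K) - x) ≤ v.intValuation r := by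
  have hr' : algebraMap K (v.adicCompletion K) (algebraMap R K r) ≠ 0 :=
    (map_ne_zero _).mpr ((map_ne_zero_iff _ (IsFractionRing.injective R K)).mpr hr)
  obtain ⟨t, ht⟩ :=
    (v.denseRange_algebraMap (K := K)).mem_nhds (Valued.setOf_sub_lt_mem_nhds x hr')
  have hval : Valued.v (algebraMap K (v.adicCompletion K) (algebraMap R K r)) = v.intValuation r :=
    (valuedAdicCompletion_eq_valuation' v _).trans (valuation_of_algebraMap v r)
  exact ⟨t, (hval ▸ ht).le⟩

theorem exists_intValuation_sub_le (s : Finset (HeightOneSpectrum R))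
    (z : HeightOneSpectrum R → R) {a : R} (ha : a ≠ 0) :
    ∃ y : R, ∀ v ∈ s, v.intValuation (y - z v) ≤ v.intValuation a := by
  obtain ⟨y, hy⟩ := IsDedekindDomain.exists_forall_sub_mem_ideal (s := s) asIdeal
    (fun v => multiplicity v.asIdeal (Ideal.span {a})) (fun v _ => v.prime)
    (fun v _ w _ hvw h => hvw (HeightOneSpectrum.ext h)) (fun v => z v)
  exact ⟨y, fun v hv => ((v.intValuation_le_pow_iff_mem _ _).mpr (hy v hv)).trans_eq
    (v.intValuation_eq_exp_neg_multiplicity ha).symm⟩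

/-- Strong approximation within `K`. -/
theorem exists_valuation_sub_le_and_valuation_le_one (s : Finset (HeightOneSpectrum R))
    (t : HeightOneSpectrum R → K) {a : R} (ha : a ≠ 0) :
    ∃ k : K, (∀ v ∈ s, v.valuation K (k - t v) ≤ v.intValuation a) ∧
      ∀ v ∉ s, v.valuation K k ≤ 1 := by
  classical
  -- Write `t v = z v / d` over a common denominator `d`, and take `k = y / d` with `y`
  -- approximating the numerators modulo `a d` at the places of `s` and divisible by `a d` at
  -- the places dividing `d`.
  obtain ⟨d, hd⟩ := IsLocalization.exist_integer_multiples (nonZeroDivisors R) s t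
  have hd0 : (d : R) ≠ 0 := nonZeroDivisors.coe_ne_zero d
  have hdK : algebraMap R K d ≠ 0 := (map_ne_zero_iff _ (IsFractionRing.injective R K)).mpr hd0
  have hnum (v : HeightOneSpectrum R) :
      ∃ z : R, v ∈ s → algebraMap R K z = algebraMap R K d * t v :=
    if hv : v ∈ s then (hd v hv).imp fun _ h _ => h.trans (Algebra.smul_def _ _)
    else ⟨0, hv.elim⟩
  choose z hz using hnum
  obtain ⟨y, hy⟩ := exists_intValuation_sub_le (s ∪ (finite_setOf_intValuation_lt_one hd0).toFinset)
    (fun v => if v ∈ s then z v else 0) (mul_ne_zero ha hd0)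
  have hvd (v : HeightOneSpectrum R) : 0 < v.intValuation d :=
    zero_lt_iff.mpr (v.intValuation_ne_zero _ hd0)
  refine ⟨algebraMap R K y / algebraMap R K d, fun v hv => ?_, fun v hv => ?_⟩
  · have hyv := hy v (Finset.mem_union_left _ hv)
    simp only [hv, if_true, map_mul] at hyv
    have hk : algebraMap R K y / algebraMap R K d - t v =
        algebraMap R K (y - z v) / algebraMap R K d := by
      rw [map_sub, hz v hv, sub_div, mul_div_cancel_left₀ _ hdK]
    rw [hk, map_div₀, valuation_of_algebraMap, valuation_of_algebraMap, div_le_iff₀ (hvd v)]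
    exact hyv
  · have hyd : v.intValuation y ≤ v.intValuation d := by
      by_cases hvd1 : v.intValuation d < 1
      · have hyv := hy v (Finset.mem_union_right _ (Set.Finite.mem_toFinset _ |>.mpr hvd1))
        simp only [hv, if_false, sub_zero, map_mul] at hyv
        exact hyv.trans (mul_le_of_le_one_left' (v.intValuation_le_one a))
      · exact (v.intValuation_le_one y).trans (not_lt.mp hvd1)
    rw [map_div₀, valuation_of_algebraMap, valuation_of_algebraMap, div_le_one₀ (hvd v)]
    exact hyd

end IsDedekindDomain.HeightOneSpectrum

namespace IsDedekindDomain.FiniteAdeleRing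

variable {R : Type*} [CommRing R] [IsDedekindDomain R] {K : Type*} [Field K] [Algebra R K]
  [IsFractionRing R K]

/-- The set `r · ∏ᵥ 𝒪ᵥ`; for `r ≠ 0` these sets form a basis of neighbourhoods of `0`. -/
def integralMultiples (r : R) : Set (FiniteAdeleRing R K) :=
  {c | ∀ v, Valued.v (c v) ≤ v.intValuation r}

theorem continuous_apply (v : HeightOneSpectrum R) :
    Continuous fun a : FiniteAdeleRing R K => a v :=
  RestrictedProduct.continuous_eval v

theorem sub_apply (a b : FiniteAdeleRing R K) (v : HeightOneSpectrum R) :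
    (a - b) v = a v - b v :=
  rfl

theorem valued_algebraMap_apply (r : R) (v : HeightOneSpectrum R) :
    Valued.v (algebraMap K (FiniteAdeleRing R K) (algebraMap R K r) v) = v.intValuation r :=
  (valuedAdicCompletion_eq_valuation' v _).trans (valuation_of_algebraMap v r)

theorem exists_integralMultiples_subset_of_mem_nhds_zero {U : Set (FiniteAdeleRing R K)}
    (hU : U ∈ 𝓝 0) : ∃ r : R, r ≠ 0 ∧ integralMultiples r ⊆ U := by
  classical
  have hnhds : 𝓝 (0 : FiniteAdeleRing R K) = Filter.map (RestrictedProduct.structureMap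
      (fun v : HeightOneSpectrum R => v.adicCompletion K)
      (fun v => (v.adicCompletionIntegers K : Set (v.adicCompletion K))) cofinite) (𝓝 0) :=
    RestrictedProduct.nhds_zero_eq_map_structureMap _ fun _ => Valued.isOpen_valuationSubring _
  have hU' : _ ∈ 𝓝 _ := Filter.mem_map.mp (hnhds ▸ hU)
  rw [nhds_pi, Filter.mem_pi] at hU'
  obtain ⟨I, hI, t, ht, hsub⟩ := hU'
  have hloc (v : HeightOneSpectrum R) : ∃ r : R, r ≠ 0 ∧ ∀ y : v.adicCompletionIntegers K,
      Valued.v (y : v.adicCompletion K) ≤ v.intValuation r → y ∈ t v := by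
    obtain ⟨u, hu, hut⟩ := (mem_nhds_subtype _ _ _).mp (ht v)
    obtain ⟨r, hr, hru⟩ := v.exists_setOf_valued_le_intValuation_subset hu
    exact ⟨r, hr, fun y hy => hut (hru hy)⟩
  choose r hr0 hr using hloc
  refine ⟨∏ v ∈ hI.toFinset, r v, Finset.prod_ne_zero_iff.mpr fun v _ => hr0 v, fun c hc => ?_⟩
  have hint (v : HeightOneSpectrum R) : c v ∈ v.adicCompletionIntegers K :=
    (mem_adicCompletionIntegers R K v).mpr ((hc v).trans (v.intValuation_le_one _))
  have hx : (fun v => ⟨c v, hint v⟩ : ∀ v : HeightOneSpectrum R, v.adicCompletionIntegers K) ∈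
      I.pi t := by
    refine fun v hv => hr v _ ((hc v).trans ?_)
    rw [map_prod, ← Finset.mul_prod_erase _ _ (hI.mem_toFinset.mpr hv)]
    exact mul_le_of_le_one_right' (Finset.prod_le_one' fun _ _ => v.intValuation_le_one _)
  exact hsub hx

theorem exists_sub_mem_integralMultiples_imp_mem {c : FiniteAdeleRing R K}
    {U : Set (FiniteAdeleRing R K)} (hU : U ∈ 𝓝 c) :
    ∃ r : R, r ≠ 0 ∧ ∀ b, b - c ∈ integralMultiples r → b ∈ U := by
  have : (· + c) ⁻¹' U ∈ 𝓝 0 :=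
    (continuous_add_const c).continuousAt.preimage_mem_nhds (by rwa [zero_add])
  obtain ⟨r, hr, hrU⟩ := exists_integralMultiples_subset_of_mem_nhds_zero this
  exact ⟨r, hr, fun b hb => by simpa using hrU hb⟩

/-- Strong approximation: `K` is dense in the finite adeles. -/
theorem exists_algebraMap_sub_mem_integralMultiples (c : FiniteAdeleRing R K) {r : R}
    (hr : r ≠ 0) : ∃ k : K, algebraMap K (FiniteAdeleRing R K) k - c ∈ integralMultiples r := by
  have hS : {v : HeightOneSpectrum R |
      c v ∉ v.adicCompletionIntegers K ∨ v.intValuation r < 1}.Finite :=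
    (Filter.eventually_cofinite.mp c.2).union (finite_setOf_intValuation_lt_one hr)
  choose t ht using fun v : HeightOneSpectrum R => v.exists_valued_coe_sub_le_intValuation (c v) hr
  obtain ⟨k, hkS, hkS'⟩ := exists_valuation_sub_le_and_valuation_le_one hS.toFinset t hr
  refine ⟨k, fun v => ?_⟩
  rw [sub_apply, algebraMap_apply]
  by_cases hv : v ∈ hS.toFinset
  · rw [← sub_add_sub_cancel _ (t v : v.adicCompletion K)]
    refine Valuation.map_add_le _ ?_ (ht v)
    rw [show (k : v.adicCompletion K) - t v = ((k - t v : K) : v.adicCompletion K) from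
      (map_sub (algebraMap K (v.adicCompletion K)) k (t v)).symm]
    exact (valuedAdicCompletion_eq_valuation' v _).trans_le (hkS v hv)
  · simp only [Set.Finite.mem_toFinset, Set.mem_ofPred_eq, not_or, not_not, not_lt] at hv
    rw [(v.intValuation_le_one r).antisymm hv.2]
    refine Valuation.map_sub_le _ ?_ ((mem_adicCompletionIntegers R K v).mp hv.1)
    rw [valuedAdicCompletion_eq_valuation']
    exact hkS' v (by simpa using hv)

theorem exists_ne_zero_algebraMap_sub_mem_integralMultiples (c : FiniteAdeleRing R K) {r : R}
    (hr : r ≠ 0) :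
    ∃ k : K, k ≠ 0 ∧ algebraMap K (FiniteAdeleRing R K) k - c ∈ integralMultiples r := by
  obtain ⟨k, hk⟩ := exists_algebraMap_sub_mem_integralMultiples c hr
  rcases eq_or_ne k 0 with rfl | hk0
  · rw [map_zero, zero_sub] at hk
    refine ⟨algebraMap R K r, (map_ne_zero_iff _ (IsFractionRing.injective R K)).mpr hr,
      fun v => ?_⟩
    rw [sub_eq_add_neg]
    exact Valuation.map_add_le _ (valued_algebraMap_apply r v).le (hk v)
  · exact ⟨k, hk0, hk⟩

theorem finite_setOf_not_valued_le_intValuation (a : FiniteAdeleRing R K) {r : R} (hr : r ≠ 0) :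
    {v | ¬ Valued.v (a v) ≤ v.intValuation r}.Finite := by
  refine ((Filter.eventually_cofinite.mp a.2).union (finite_setOf_intValuation_lt_one hr)).subset
    fun v hv => ?_
  by_cases ha : a v ∈ v.adicCompletionIntegers K
  · exact Or.inr (lt_of_not_ge fun h => hv (((mem_adicCompletionIntegers R K v).mp ha).trans h))
  · exact Or.inl ha

def zeroSet (a : FiniteAdeleRing R K) : Set (HeightOneSpectrum R) :=
  {v | a v = 0}

open Classical in
noncomputable def piecewise (T : Set (HeightOneSpectrum R)) (a b : FiniteAdeleRing R K) :
    FiniteAdeleRing R K :=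
  ⟨T.piecewise a b, by
    filter_upwards [a.2, b.2] with v ha hb
    by_cases hv : v ∈ T <;> simp only [Set.piecewise, hv, if_true, if_false] <;> assumption⟩

open Classical in
theorem piecewise_apply (T : Set (HeightOneSpectrum R)) (a b : FiniteAdeleRing R K)
    (v : HeightOneSpectrum R) : piecewise T a b v = if v ∈ T then a v else b v :=
  rfl

open Classical in
theorem zeroSet_piecewise_zero_one (T : Set (HeightOneSpectrum R)) :
    zeroSet (piecewise T 0 1 : FiniteAdeleRing R K) = T := by
  ext v
  change (if v ∈ T then (0 : FiniteAdeleRing R K) v else (1 : FiniteAdeleRing R K) v) = 0 ↔ v ∈ T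
  split_ifs with hv
  exacts [iff_of_true rfl hv, iff_of_false one_ne_zero hv]

theorem zeroSet_surjective : Function.Surjective (zeroSet : FiniteAdeleRing R K → _) :=
  fun T => ⟨piecewise T 0 1, zeroSet_piecewise_zero_one T⟩

theorem exists_mul_sub_mem_integralMultiples {a b : FiniteAdeleRing R K}
    (hab : zeroSet a ⊆ zeroSet b) {r : R} (hr : r ≠ 0) :
    ∃ y : FiniteAdeleRing R K, y * a - b ∈ integralMultiples r := by
  classical
  set S := {v : HeightOneSpectrum R | ¬ Valued.v (b v) ≤ v.intValuation r}
  have hS : S.Finite := finite_setOf_not_valued_le_intValuation b hr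
  refine ⟨⟨fun v => if v ∈ S then b v / a v else 0,
    hS.eventually_cofinite_notMem.mono fun v hv => by
      simp only [if_neg hv]
      exact zero_mem _⟩, fun v => ?_⟩
  change Valued.v ((if v ∈ S then b v / a v else 0) * a v - b v) ≤ _
  split_ifs with hv
  · rcases eq_or_ne (a v) 0 with ha | ha
    · rw [ha, mul_zero, hab ha, sub_zero, map_zero]
      exact zero_le
    · rw [div_mul_cancel₀ _ ha, sub_self, map_zero]
      exact zero_le
  · rw [zero_mul, zero_sub, Valuation.map_neg]
    exact not_not.mp hv

theorem isClosed_setOf_zeroSet_subset (a : FiniteAdeleRing R K) :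
    IsClosed {b : FiniteAdeleRing R K | zeroSet a ⊆ zeroSet b} := by
  have : {b : FiniteAdeleRing R K | zeroSet a ⊆ zeroSet b} = ⋂ v ∈ zeroSet a, {b | b v = 0} := by
    ext
    simp [Set.subset_def, zeroSet]
  rw [this]
  exact isClosed_biInter fun v _ => isClosed_eq (continuous_apply v) continuous_const

theorem closure_orbit (a : FiniteAdeleRing R K) :
    closure {b | ∃ x : K, x ≠ 0 ∧ b = algebraMap K (FiniteAdeleRing R K) x * a} =
      {b | zeroSet a ⊆ zeroSet b} := by
  refine subset_antisymm (closure_minimal ?_ (isClosed_setOf_zeroSet_subset a)) fun b hb => ?_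
  · rintro _ ⟨x, -, rfl⟩ v (hv : a v = 0)
    show algebraMap K (FiniteAdeleRing R K) x v * a v = 0
    rw [hv, mul_zero]
  -- First approximate `b` by `y * a` with `y` an adele, then `y` by an element of `K^*`.
  rw [mem_closure_iff]
  intro U hU hbU
  obtain ⟨r, hr, hrU⟩ := exists_sub_mem_integralMultiples_imp_mem (hU.mem_nhds hbU)
  obtain ⟨y, hy⟩ := exists_mul_sub_mem_integralMultiples hb hr
  have hV : IsOpen ((· * a) ⁻¹' U) := hU.preimage (continuous_mul_const a)
  obtain ⟨s, hs, hsV⟩ := exists_sub_mem_integralMultiples_imp_mem (hV.mem_nhds (hrU _ hy))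
  obtain ⟨x, hx0, hx⟩ := exists_ne_zero_algebraMap_sub_mem_integralMultiples y hs
  exact ⟨_, hsV _ hx, x, hx0, rfl⟩

theorem exists_finset_forall_exists_zeroSet_eq (a : FiniteAdeleRing R K) {r : R} (hr : r ≠ 0) :
    ∃ F : Finset (HeightOneSpectrum R), (∀ v ∈ F, v ∉ zeroSet a) ∧
      ∀ T : Set (HeightOneSpectrum R), (∀ v ∈ F, v ∉ T) →
        ∃ b, b - a ∈ integralMultiples r ∧ zeroSet b = T := by
  have hF := finite_setOf_not_valued_le_intValuation a hr
  refine ⟨hF.toFinset, fun v hv (hav : a v = 0) => by simp [hav] at hv, fun T hT => ?_⟩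
  refine ⟨piecewise T 0 (piecewise (zeroSet a) (algebraMap K _ (algebraMap R K r)) a),
    fun v => ?_, ?_⟩
  · rw [sub_apply, piecewise_apply, piecewise_apply]
    split_ifs with hvT hva
    · rw [show (0 : FiniteAdeleRing R K) v = 0 from rfl, zero_sub, Valuation.map_neg]
      exact not_not.mp fun h => hT v (hF.mem_toFinset.mpr h) hvT
    · rw [show a v = 0 from hva, sub_zero, valued_algebraMap_apply]
    · rw [sub_self, map_zero]
      exact zero_le
  · ext v
    change piecewise T 0 (piecewise (zeroSet a) _ a) v = 0 ↔ v ∈ T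
    rw [piecewise_apply, piecewise_apply]
    split_ifs with hvT hva
    · exact iff_of_true rfl hvT
    · refine iff_of_false ?_ hvT
      exact (map_ne_zero (algebraMap K (v.adicCompletion K))).mpr
        ((map_ne_zero_iff _ (IsFractionRing.injective R K)).mpr hr)
    · exact iff_of_false hva hvT

section PowerCofinite

attribute [local instance] powerCofinite

theorem continuous_zeroSet : Continuous (zeroSet : FiniteAdeleRing R K → _) := by
  refine continuous_generateFrom_iff.mpr ?_
  rintro _ ⟨F, rfl⟩
  have : zeroSet ⁻¹' {T | ∀ v ∈ F, v ∉ T} = ⋂ v ∈ F, {a : FiniteAdeleRing R K | a v ≠ 0} := by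
    ext
    simp [zeroSet]
  rw [this]
  exact isOpen_biInter_finset fun v _ => isOpen_ne_fun (continuous_apply v) continuous_const

theorem isOpenMap_zeroSet : IsOpenMap (zeroSet : FiniteAdeleRing R K → _) := by
  intro U hU
  rw [isOpen_iff_forall_mem_open]
  rintro _ ⟨a, ha, rfl⟩
  obtain ⟨r, hr, hrU⟩ := exists_sub_mem_integralMultiples_imp_mem (hU.mem_nhds ha)
  obtain ⟨F, hFa, hF⟩ := exists_finset_forall_exists_zeroSet_eq a hr
  refine ⟨{T | ∀ v ∈ F, v ∉ T}, fun T hT => ?_,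
    TopologicalSpace.isOpen_generateFrom_of_mem ⟨F, rfl⟩, hFa⟩
  obtain ⟨b, hb, rfl⟩ := hF T hT
  exact ⟨b, hrU b hb, rfl⟩

end PowerCofinite

end IsDedekindDomain.FiniteAdeleRing

open IsDedekindDomain.FiniteAdeleRing

theorem quasiOrbitSetoid_eq_ker_zeroSet (K : Type*) [Field K] [NumberField K] :
    quasiOrbitSetoid K = Setoid.ker zeroSet := by
  refine Setoid.ext fun a b => ?_
  show closure _ = closure _ ↔ zeroSet a = zeroSet b
  rw [closure_orbit, closure_orbit]
  exact (Set.preimage_injective.mpr zeroSet_surjective).eq_iff.trans Set.Ici_inj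

/-- The map `a ↦ Z(a) = {v : a_v = 0}` descends to a homeomorphism from the quasi-orbit
space `Q(A_{K,f}/K^*)` (with the quotient topology) onto the power set `2^{P_K}` with the
power-cofinite topology. -/
theorem statement8 (K : Type*) [Field K] [NumberField K] :
    letI := powerCofinite (HeightOneSpectrum (NumberField.RingOfIntegers K))
    ∃ e : Quotient (quasiOrbitSetoid K) ≃ₜ
        Set (HeightOneSpectrum (NumberField.RingOfIntegers K)),
      ∀ a : FiniteAdeleRing (NumberField.RingOfIntegers K) K,
        e (Quotient.mk (quasiOrbitSetoid K) a)
          = {v : HeightOneSpectrum (NumberField.RingOfIntegers K) | a v = 0} := by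
  let _ := powerCofinite (HeightOneSpectrum (NumberField.RingOfIntegers K))
  let Z : C(FiniteAdeleRing (NumberField.RingOfIntegers K) K,
      Set (HeightOneSpectrum (NumberField.RingOfIntegers K))) := ⟨zeroSet, continuous_zeroSet⟩
  have hZ : IsQuotientMap Z :=
    isOpenMap_zeroSet.isQuotientMap continuous_zeroSet zeroSet_surjective
  rw [quasiOrbitSetoid_eq_ker_zeroSet]
  exact ⟨hZ.homeomorph, fun a => rfl⟩
end

section
/- Let K be a number field and let G_K = K^* ⋉ A_{K,f} be the transformation groupoid of the multiplication action of K^* on the finite adele ring. Then G_K is non-wandering: for every nonempty compact open subset U ⊆ A_{K,f} there exist x ∈ A_{K,f} and g ∈ K^* with gx ≠ x and both x ∈ U and gx ∈ U. -/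
/-!
A neighbourhood of `0` in the finite adeles constrains only finitely many places, and at each of
them the powers of an element of `R` lying in the corresponding prime tend to `0`. Hence every
neighbourhood of `0` contains a nonzero nonunit `t ∈ R`. For a nonzero `x ∈ U`, choosing `t` with
`x + t x ∈ U` gives `g = 1 + t ∈ Kˣ` with `g x ∈ U`, and `g x ≠ x` because `t` is invertible in `K`.
-/

open IsDedekindDomain Filter Topology

namespace IsDedekindDomain

variable {R : Type*} [CommRing R] [IsDedekindDomain R]

theorem HeightOneSpectrum.exists_ne_zero_forall_mem (S : Finset (HeightOneSpectrum R)) :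
    ∃ a : R, a ≠ 0 ∧ ∀ v ∈ S, a ∈ v.asIdeal := by
  have hS : ∏ v ∈ S, v.asIdeal ≠ ⊥ := Finset.prod_ne_zero_iff.mpr fun v _ => v.ne_bot
  obtain ⟨a, ha, ha0⟩ := Submodule.exists_mem_ne_zero_of_ne_bot hS
  exact ⟨a, ha0, fun v hv =>
    Finset.inf_le (f := HeightOneSpectrum.asIdeal) hv (Ideal.prod_le_inf ha)⟩

variable {K : Type*} [Field K] [Algebra R K] [IsFractionRing R K]

theorem HeightOneSpectrum.tendsto_algebraMap_pow_adicCompletionIntegers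
    (v : HeightOneSpectrum R) {a : R} (ha : a ∈ v.asIdeal) :
    Tendsto (fun n : ℕ => algebraMap R (v.adicCompletionIntegers K) a ^ n) atTop (𝓝 0) := by
  have hlt : Valued.v (algebraMap R (v.adicCompletionIntegers K) a : v.adicCompletion K) < 1 := by
    rw [algebraMap_adicCompletionIntegers_apply, valuedAdicCompletion_eq_valuation']
    exact (v.valuation_lt_one_iff_mem a).mpr ha
  rw [Topology.IsInducing.subtypeVal.tendsto_nhds_iff]
  simpa only [Function.comp_def, SubmonoidClass.coe_pow, ZeroMemClass.coe_zero]
    using Valued.tendsto_zero_pow_of_v_lt_one hlt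

namespace FiniteAdeleRing

theorem algebraMap_eq_structureMap (r : R) :
    algebraMap R (FiniteAdeleRing R K) r =
      RestrictedProduct.structureMap _ _ cofinite
        (algebraMap R (Π v : HeightOneSpectrum R, v.adicCompletionIntegers K) r) :=
  rfl

theorem exists_finset_eventually_algebraMap_pow_mem {W : Set (FiniteAdeleRing R K)}
    (hW : W ∈ 𝓝 0) : ∃ S : Finset (HeightOneSpectrum R), ∀ a : R, (∀ v ∈ S, a ∈ v.asIdeal) →
      ∀ᶠ n : ℕ in atTop, algebraMap R (FiniteAdeleRing R K) (a ^ n) ∈ W := by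
  have hopen (v : HeightOneSpectrum R) :
      IsOpen (v.adicCompletionIntegers K : Set (v.adicCompletion K)) :=
    Valued.isOpen_valuationSubring _
  have hW' : RestrictedProduct.structureMap _ _ cofinite ⁻¹' W ∈
      𝓝 (0 : Π v : HeightOneSpectrum R, v.adicCompletionIntegers K) :=
    mem_map.mp (RestrictedProduct.nhds_zero_eq_map_structureMap
      (R := fun v : HeightOneSpectrum R => v.adicCompletion K) hopen ▸ hW)
  rw [nhds_pi, mem_pi] at hW'
  obtain ⟨I, hI, T, hT, hIT⟩ := hW'
  refine ⟨hI.toFinset, fun a ha => ?_⟩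
  have hev (v) (hv : v ∈ I) : ∀ᶠ n : ℕ in atTop, algebraMap R _ a ^ n ∈ T v :=
    v.tendsto_algebraMap_pow_adicCompletionIntegers (ha v (hI.mem_toFinset.mpr hv)) (hT v)
  filter_upwards [(eventually_all_finite hI).2 hev] with n hn
  rw [algebraMap_eq_structureMap, map_pow]
  exact hIT hn

theorem isUnit_algebraMap {t : R} (ht : t ≠ 0) : IsUnit (algebraMap R (FiniteAdeleRing R K) t) := by
  rw [IsScalarTower.algebraMap_apply R K]
  exact (isUnit_iff_ne_zero.mpr ((map_ne_zero_iff _ (IsFractionRing.injective R K)).mpr ht)).map _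

variable [Nonempty (HeightOneSpectrum R)]

instance : Nontrivial (FiniteAdeleRing R K) :=
  let ⟨v⟩ := ‹Nonempty (HeightOneSpectrum R)›
  ⟨0, 1, fun h => zero_ne_one (DFunLike.congr_fun h v)⟩

theorem exists_algebraMap_mem_of_mem_nhds_zero {W : Set (FiniteAdeleRing R K)} (hW : W ∈ 𝓝 0) :
    ∃ t : R, t ≠ 0 ∧ ¬IsUnit t ∧ algebraMap R (FiniteAdeleRing R K) t ∈ W := by
  classical
  obtain ⟨S, hS⟩ := exists_finset_eventually_algebraMap_pow_mem hW
  obtain ⟨v₀⟩ := ‹Nonempty (HeightOneSpectrum R)›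
  obtain ⟨a, ha0, ha⟩ := HeightOneSpectrum.exists_ne_zero_forall_mem (insert v₀ S)
  obtain ⟨n, hnW, hn⟩ :=
    ((hS a fun v hv => ha v (Finset.mem_insert_of_mem hv)).and (eventually_gt_atTop 0)).exists
  have hv₀ : a ^ n ∈ v₀.asIdeal :=
    v₀.asIdeal.pow_mem_of_mem (ha v₀ (Finset.mem_insert_self _ _)) n hn
  exact ⟨a ^ n, pow_ne_zero _ ha0,
    fun hu => v₀.isPrime.ne_top (Ideal.eq_top_of_isUnit_mem _ hv₀ hu), hnW⟩

theorem exists_ne_zero_mem_of_isOpen {U : Set (FiniteAdeleRing R K)} (hUo : IsOpen U)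
    (hU : U.Nonempty) : ∃ x ∈ U, x ≠ 0 := by
  obtain ⟨x, hx⟩ := hU
  by_cases hx0 : x = 0
  · subst hx0
    obtain ⟨t, ht0, -, htU⟩ := exists_algebraMap_mem_of_mem_nhds_zero (hUo.mem_nhds hx)
    exact ⟨_, htU, (isUnit_algebraMap ht0).ne_zero⟩
  · exact ⟨x, hx, hx0⟩

theorem exists_algebraMap_mul_ne_self_mem {U : Set (FiniteAdeleRing R K)} (hUo : IsOpen U)
    (hU : U.Nonempty) : ∃ (x : FiniteAdeleRing R K) (g : K), g ≠ 0 ∧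
      algebraMap K (FiniteAdeleRing R K) g * x ≠ x ∧ x ∈ U ∧
      algebraMap K (FiniteAdeleRing R K) g * x ∈ U := by
  obtain ⟨x, hxU, hx0⟩ := exists_ne_zero_mem_of_isOpen hUo hU
  have hW : {y | x + y * x ∈ U} ∈ 𝓝 (0 : FiniteAdeleRing R K) := by
    refine (continuous_const.add (continuous_id.mul continuous_const)).continuousAt
      |>.preimage_mem_nhds ?_
    simpa using hUo.mem_nhds hxU
  obtain ⟨t, ht0, ht, htW⟩ := exists_algebraMap_mem_of_mem_nhds_zero hW
  have hg : algebraMap K (FiniteAdeleRing R K) (1 + algebraMap R K t) * x =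
      x + algebraMap R (FiniteAdeleRing R K) t * x := by
    rw [map_add, map_one, ← IsScalarTower.algebraMap_apply, add_mul, one_mul]
  refine ⟨x, 1 + algebraMap R K t, ?_, ?_, hxU, hg ▸ htW⟩
  · rw [← map_one (algebraMap R K), ← map_add, map_ne_zero_iff _ (IsFractionRing.injective R K)]
    exact fun h => ht (neg_eq_of_add_eq_zero_right h ▸ isUnit_one.neg)
  · rw [hg, ne_eq, add_eq_left, (isUnit_algebraMap ht0).mul_right_eq_zero]
    exact hx0

end FiniteAdeleRing
end IsDedekindDomain

theorem statement14_general (K : Type*) [Field K] [NumberField K]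
    (U : Set (FiniteAdeleRing (NumberField.RingOfIntegers K) K))
    (hUo : IsOpen U) (hU : U.Nonempty) :
    ∃ (x : FiniteAdeleRing (NumberField.RingOfIntegers K) K) (g : K), g ≠ 0 ∧
      algebraMap K (FiniteAdeleRing (NumberField.RingOfIntegers K) K) g * x ≠ x ∧
      x ∈ U ∧
      algebraMap K (FiniteAdeleRing (NumberField.RingOfIntegers K) K) g * x ∈ U := by
  have : Nonempty (HeightOneSpectrum (NumberField.RingOfIntegers K)) :=
    ⟨(HeightOneSpectrum.equivMaximalSpectrum (NumberField.RingOfIntegers.not_isField K)).symm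
      (Classical.arbitrary _)⟩
  exact FiniteAdeleRing.exists_algebraMap_mul_ne_self_mem hUo hU

/-- The transformation groupoid `G_K = K^* ⋉ A_{K,f}` is non-wandering: for every nonempty
compact open subset `U` of the finite adele ring there are `x ∈ A_{K,f}` and `g ∈ K^*` with
`g·x ≠ x` and both `x, g·x ∈ U`. -/
theorem statement14 (K : Type*) [Field K] [NumberField K]
    (U : Set (FiniteAdeleRing (NumberField.RingOfIntegers K) K))
    (hUc : IsCompact U) (hUo : IsOpen U) (hU : U.Nonempty) :
    ∃ (x : FiniteAdeleRing (NumberField.RingOfIntegers K) K) (g : K), g ≠ 0 ∧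
      algebraMap K (FiniteAdeleRing (NumberField.RingOfIntegers K) K) g * x ≠ x ∧
      x ∈ U ∧
      algebraMap K (FiniteAdeleRing (NumberField.RingOfIntegers K) K) g * x ∈ U :=
  statement14_general K U hUo hU
end

section
/- Let G and H be Hausdorff topological groups and let μ be a finite subgroup of G × H such that μ ∩ ({1} × H) = {(1,1)} and the image of μ in G is discrete in G. Then the map ι: H → (G × H)/μ, h ↦ (1,h)μ, is a topological group isomorphism onto its image; i.e., ι is an injective continuous homomorphism that is a homeomorphism onto its range. -/
/-!
If `(1, h)μ = (a, b)μ` then `(a, h⁻¹ b) ∈ μ`, so `a` lies in the image of `μ` in `G`. Choosing an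
open `U ∋ 1` of `G` meeting that image only in `1` (discreteness), such an `a ∈ U` must be `1`,
and then `b = h` because `μ` meets `{1} × H` trivially. Hence every open `V ⊆ H` is the preimage
of the open set `(U × V)μ`, which makes `h ↦ (1, h)μ` inducing; it is injective by the same
triviality.
-/

open Topology

namespace QuotientGroup

variable {G H : Type*} [Group G] [Group H] {μ : Subgroup (G × H)}

theorem mk_one_prod_eq_mk_iff {h : H} {x : G × H} :
    (mk ((1 : G), h) : (G × H) ⧸ μ) = mk x ↔ (x.1, h⁻¹ * x.2) ∈ μ := by
  rw [QuotientGroup.eq, Prod.inv_mk, inv_one, Prod.mk_mul_mk, one_mul]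

theorem injective_mk_one_prod (htriv : ∀ h : H, ((1 : G), h) ∈ μ → h = 1) :
    Function.Injective (fun h : H => (mk ((1 : G), h) : (G × H) ⧸ μ)) :=
  fun _ _ hab => inv_mul_eq_one.mp (htriv _ (mk_one_prod_eq_mk_iff.mp hab))

theorem preimage_mk_one_prod_image_mk_prod (htriv : ∀ h : H, ((1 : G), h) ∈ μ → h = 1)
    {U : Set G} (hU : U ∩ Prod.fst '' (μ : Set (G × H)) = {1}) (V : Set H) :
    (fun h : H => (mk ((1 : G), h) : (G × H) ⧸ μ)) ⁻¹' (mk '' (U ×ˢ V)) = V := by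
  ext h
  constructor
  · rintro ⟨⟨a, b⟩, ⟨haU, hbV⟩, hab⟩
    have hmem : (a, h⁻¹ * b) ∈ μ := mk_one_prod_eq_mk_iff.mp hab.symm
    have ha : a = 1 := hU.subset ⟨haU, _, hmem, rfl⟩
    subst ha
    rwa [inv_mul_eq_one.mp (htriv _ hmem)]
  · intro hV
    exact ⟨(1, h), ⟨(hU.symm.subset rfl).1, hV⟩, rfl⟩

variable [TopologicalSpace G] [SeparatelyContinuousMul G]
  [TopologicalSpace H] [SeparatelyContinuousMul H]

theorem isEmbedding_mk_one_prod (htriv : ∀ h : H, ((1 : G), h) ∈ μ → h = 1)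
    {U : Set G} (hUo : IsOpen U) (hU : U ∩ Prod.fst '' (μ : Set (G × H)) = {1}) :
    IsEmbedding (fun h : H => (mk ((1 : G), h) : (G × H) ⧸ μ)) := by
  have hcont : Continuous (fun h : H => (mk ((1 : G), h) : (G × H) ⧸ μ)) := by fun_prop
  refine ⟨⟨le_antisymm hcont.le_induced fun V hV => ?_⟩, injective_mk_one_prod htriv⟩
  exact isOpen_induced_iff.mpr ⟨_, isOpenMap_coe _ (hUo.prod hV),
    preimage_mk_one_prod_image_mk_prod htriv hU V⟩

end QuotientGroup

theorem statement17_general (G H : Type*) [Group G] [Group H]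
    [TopologicalSpace G] [IsTopologicalGroup G]
    [TopologicalSpace H] [IsTopologicalGroup H]
    (μ : Subgroup (G × H))
    (htriv : ∀ h : H, ((1 : G), h) ∈ μ → h = 1)
    (hdisc : DiscreteTopology ↥(Prod.fst '' (μ : Set (G × H)))) :
    Topology.IsEmbedding (fun h : H => (QuotientGroup.mk ((1 : G), h) : (G × H) ⧸ μ)) := by
  obtain ⟨U, hUo, hU⟩ := isOpen_inter_eq_singleton_of_mem_discrete
    (isDiscrete_iff_discreteTopology.mpr hdisc) ⟨1, μ.one_mem, rfl⟩
  exact QuotientGroup.isEmbedding_mk_one_prod htriv hUo hU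

/-- Let `G`, `H` be Hausdorff topological groups and `μ` a finite subgroup of `G × H` with
`μ ∩ ({1} × H) = {1}` whose image in `G` is discrete.  Then `h ↦ (1, h)μ` is a topological
embedding of `H` into the coset space `(G × H)/μ`, i.e. an injective continuous map that is
a homeomorphism onto its image. -/
theorem statement17 (G H : Type*) [Group G] [Group H]
    [TopologicalSpace G] [IsTopologicalGroup G] [T2Space G]
    [TopologicalSpace H] [IsTopologicalGroup H] [T2Space H]
    (μ : Subgroup (G × H)) [Finite μ]
    (htriv : ∀ h : H, ((1 : G), h) ∈ μ → h = 1)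
    (hdisc : DiscreteTopology ↥(Prod.fst '' (μ : Set (G × H)))) :
    Topology.IsEmbedding (fun h : H => (QuotientGroup.mk ((1 : G), h) : (G × H) ⧸ μ)) :=
  statement17_general G H μ htriv hdisc
end
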